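/- Coercivity in the isotropic case: let f_0(v) = Z⁻¹ e^{-φ_α(v)/D} with ∫ |v|² f_0 dv ≥ dD, and suppose f_0 satisfies a Poincaré inequality with constant Λ > 0: ∫ |∇h|² f_0 ≥ Λ ∫ h² f_0 for all h ∈ H¹(f_0 dv) with ∫ h f_0 = 0. Then for every g ∈ H¹(f_0 dv) with ∫ g f_0 = 0, setting v_g = D⁻¹ ∫ v g f_0 dv, one has D² ∫ |∇g - v_g|² f_0 dv ≥ DΛ (D ∫ g² f_0 dv - D² |v_g|²). -/

import Mathlib

open MeasureTheory Real

set_option maxHeartbeats 1000000 in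
theorem stmt_16 (d : ℕ) (hd : 1 ≤ d) (α D Λ : ℝ) (hα : 0 < α) (hD : 0 < D)
    (hΛ : 0 < Λ)
    (φ : ℝ → ℝ) (hφ : ∀ s : ℝ, φ s = α / 4 * s ^ 4 + (1 - α) / 2 * s ^ 2)
    (Z : ℝ) (hZ : Z = ∫ v : EuclideanSpace ℝ (Fin d), Real.exp (-φ ‖v‖ / D))
    (f₀ : EuclideanSpace ℝ (Fin d) → ℝ)
    (hf₀ : ∀ v, f₀ v = Real.exp (-φ ‖v‖ / D) / Z)
    (hmom : d * D ≤ ∫ v, ‖v‖ ^ 2 * f₀ v)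
    (hPoincare : ∀ h : EuclideanSpace ℝ (Fin d) → ℝ, Differentiable ℝ h →
      Integrable (fun v => h v ^ 2 * f₀ v) →
      Integrable (fun v => ‖gradient h v‖ ^ 2 * f₀ v) →
      Integrable (fun v => h v * f₀ v) →
      (∫ v, h v * f₀ v) = 0 →
      Λ * ∫ v, h v ^ 2 * f₀ v ≤ ∫ v, ‖gradient h v‖ ^ 2 * f₀ v)
    (g : EuclideanSpace ℝ (Fin d) → ℝ) (hgdiff : Differentiable ℝ g)
    (hg2 : Integrable (fun v => g v ^ 2 * f₀ v))
    (hgrad : Integrable (fun v => ‖gradient g v‖ ^ 2 * f₀ v))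
    (hg0 : Integrable (fun v => g v * f₀ v))
    (hg1 : Integrable (fun v => (g v * f₀ v) • v))
    (hmean : ∫ v, g v * f₀ v = 0)
    (vg : EuclideanSpace ℝ (Fin d))
    (hvg : vg = D⁻¹ • ∫ v, (g v * f₀ v) • v)
    (hgradvg : Integrable (fun v => ‖gradient g v - vg‖ ^ 2 * f₀ v)) :
    D * Λ * (D * (∫ v, g v ^ 2 * f₀ v) - D ^ 2 * ‖vg‖ ^ 2)
      ≤ D ^ 2 * ∫ v, ‖gradient g v - vg‖ ^ 2 * f₀ v := by
  have hdD : (0:ℝ) < d * D := by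
    have : (1:ℝ) ≤ d := by exact_mod_cast hd
    nlinarith
  -- the second moment is integrable
  have hI2 : Integrable (fun v : EuclideanSpace ℝ (Fin d) => ‖v‖ ^ 2 * f₀ v) := by
    by_contra hcon
    rw [integral_undef hcon] at hmom
    linarith
  -- Z is positive
  have hZpos : 0 < Z := by
    rcases lt_or_eq_of_le (hZ ▸ integral_nonneg (fun v => (Real.exp_pos _).le)) with h | h
    · exact h
    · exfalso
      have h0 : ∀ v : EuclideanSpace ℝ (Fin d), f₀ v = 0 := by
        intro v; rw [hf₀, ← h, div_zero]
      have : (∫ v : EuclideanSpace ℝ (Fin d), ‖v‖ ^ 2 * f₀ v) = 0 := by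
        simp [h0]
      rw [this] at hmom; linarith
  have hf₀pos : ∀ v : EuclideanSpace ℝ (Fin d), 0 < f₀ v := fun v => by
    rw [hf₀]; exact div_pos (Real.exp_pos _) hZpos
  have hf₀cont : Continuous f₀ := by
    have : f₀ = fun v : EuclideanSpace ℝ (Fin d) =>
        Real.exp (-(α / 4 * ‖v‖ ^ 4 + (1 - α) / 2 * ‖v‖ ^ 2) / D) / Z := by
      funext v; rw [hf₀, hφ]
    rw [this]; fun_prop
  -- f₀ depends only on the norm
  have hf₀norm : ∀ v w : EuclideanSpace ℝ (Fin d), ‖v‖ = ‖w‖ → f₀ v = f₀ w := by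
    intro v w h; rw [hf₀, hf₀, h]
  -- bound on the unit ball
  set B : ℝ := Real.exp ((α / 4 + |1 - α| / 2) / D) / Z with hB
  have hBpos : 0 < B := div_pos (Real.exp_pos _) hZpos
  have hBball : ∀ v : EuclideanSpace ℝ (Fin d), ‖v‖ ≤ 1 → f₀ v ≤ B := by
    intro v hv
    rw [hf₀, hB, hφ]
    have hnn : (0:ℝ) ≤ ‖v‖ := norm_nonneg _
    have hsq : ‖v‖ ^ 2 ≤ 1 := by nlinarith
    have h1 : -(α / 4 * ‖v‖ ^ 4 + (1 - α) / 2 * ‖v‖ ^ 2) ≤ α / 4 + |1 - α| / 2 := by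
      nlinarith [neg_le_abs (1 - α), abs_nonneg (1 - α), sq_nonneg ‖v‖,
        pow_nonneg hnn 4, sq_nonneg (‖v‖ ^ 2)]
    gcongr
  -- integrability of ‖v‖ f₀
  have hI1 : Integrable (fun v : EuclideanSpace ℝ (Fin d) => ‖v‖ * f₀ v) := by
    have hIb : Integrable (fun v : EuclideanSpace ℝ (Fin d) =>
        (Metric.closedBall (0:EuclideanSpace ℝ (Fin d)) 1).indicator (fun _ => B) v + ‖v‖ ^ 2 * f₀ v) := by
      refine Integrable.add ?_ hI2
      rw [integrable_indicator_iff measurableSet_closedBall]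
      exact integrableOn_const measure_closedBall_lt_top.ne
    refine hIb.mono ?_ ?_
    · exact (continuous_norm.mul hf₀cont).aestronglyMeasurable
    · filter_upwards with v
      have h1 : 0 ≤ ‖v‖ * f₀ v := mul_nonneg (norm_nonneg _) (hf₀pos v).le
      rw [Real.norm_of_nonneg h1]
      rcases le_or_gt ‖v‖ 1 with hv | hv
      · have : ‖v‖ * f₀ v ≤ B := by
          calc ‖v‖ * f₀ v ≤ 1 * f₀ v :=
                mul_le_mul_of_nonneg_right hv (hf₀pos v).le
            _ = f₀ v := one_mul _
            _ ≤ B := hBball v hv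
        have hind : (Metric.closedBall (0:EuclideanSpace ℝ (Fin d)) 1).indicator (fun _ => B) v = B := by
          rw [Set.indicator_of_mem]
          simpa [Metric.mem_closedBall, dist_zero_right] using hv
        have h2 : 0 ≤ ‖v‖ ^ 2 * f₀ v := mul_nonneg (sq_nonneg _) (hf₀pos v).le
        calc ‖v‖ * f₀ v ≤ B + ‖v‖ ^ 2 * f₀ v := by linarith
          _ ≤ ‖(Metric.closedBall (0:EuclideanSpace ℝ (Fin d)) 1).indicator (fun _ => B) v + ‖v‖ ^ 2 * f₀ v‖ := by
              rw [hind]; exact le_abs_self _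
      · have : ‖v‖ * f₀ v ≤ ‖v‖ ^ 2 * f₀ v := by
          have : ‖v‖ ≤ ‖v‖ ^ 2 := by nlinarith
          exact mul_le_mul_of_nonneg_right this (hf₀pos v).le
        have hind : 0 ≤ (Metric.closedBall (0:EuclideanSpace ℝ (Fin d)) 1).indicator (fun _ => B) v := by
          apply Set.indicator_nonneg; intro _ _; exact hBpos.le
        calc ‖v‖ * f₀ v ≤ (Metric.closedBall (0:EuclideanSpace ℝ (Fin d)) 1).indicator (fun _ => B) v
              + ‖v‖ ^ 2 * f₀ v := by linarith
          _ ≤ ‖_‖ := le_abs_self _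

  -- integrability of the inner-product integrands
  have hIinner1 : Integrable (fun v : EuclideanSpace ℝ (Fin d) => (inner ℝ v vg : ℝ) * f₀ v) := by
    refine (hI1.const_mul ‖vg‖).mono ?_ ?_
    · exact ((continuous_id.inner continuous_const).mul hf₀cont).aestronglyMeasurable
    · filter_upwards with v
      have h1 := abs_real_inner_le_norm v vg
      have h2 := (hf₀pos v).le
      rw [norm_mul, Real.norm_eq_abs, Real.norm_eq_abs (f₀ v), abs_of_nonneg h2,
        Real.norm_eq_abs, abs_of_nonneg (by positivity : (0:ℝ) ≤ ‖vg‖ * (‖v‖ * f₀ v))]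
      nlinarith [mul_le_mul_of_nonneg_right h1 h2]
  have hIinnerW : ∀ w : EuclideanSpace ℝ (Fin d),
      Integrable (fun v : EuclideanSpace ℝ (Fin d) => (inner ℝ v w : ℝ) ^ 2 * f₀ v) := by
    intro vg
    refine (hI2.const_mul (‖vg‖ ^ 2)).mono ?_ ?_
    · exact (((continuous_id.inner continuous_const).pow 2).mul hf₀cont).aestronglyMeasurable
    · filter_upwards with v
      have h1 := abs_real_inner_le_norm v vg
      have h2 := (hf₀pos v).le
      have h3 : (inner ℝ v vg : ℝ) ^ 2 ≤ ‖v‖ ^ 2 * ‖vg‖ ^ 2 := by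
        nlinarith [sq_abs (inner ℝ v vg : ℝ), abs_nonneg (inner ℝ v vg : ℝ),
          norm_nonneg v, norm_nonneg vg]
      rw [norm_mul, Real.norm_eq_abs, Real.norm_eq_abs (f₀ v), abs_of_nonneg h2,
        abs_of_nonneg (sq_nonneg _), Real.norm_eq_abs,
        abs_of_nonneg (by positivity : (0:ℝ) ≤ ‖vg‖ ^ 2 * (‖v‖ ^ 2 * f₀ v))]
      nlinarith [mul_le_mul_of_nonneg_right h3 h2]
  have hIinner2 := hIinnerW vg
  -- odd symmetry: the first inner moment of f₀ vanishes
  have hodd : (∫ v : EuclideanSpace ℝ (Fin d), (inner ℝ v vg : ℝ) * f₀ v) = 0 := by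
    have h1 : (∫ v : EuclideanSpace ℝ (Fin d), (inner ℝ (-v) vg : ℝ) * f₀ (-v))
        = ∫ v, (inner ℝ v vg : ℝ) * f₀ v :=
      integral_neg_eq_self (fun v : EuclideanSpace ℝ (Fin d) => (inner ℝ v vg : ℝ) * f₀ v) volume
    have h2 : (fun v : EuclideanSpace ℝ (Fin d) => (inner ℝ (-v) vg : ℝ) * f₀ (-v))
        = fun v => -((inner ℝ v vg : ℝ) * f₀ v) := by
      funext v
      rw [inner_neg_left, hf₀norm (-v) v (norm_neg v)]
      push_cast
      ring
    rw [h2, integral_neg] at h1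
    linarith
  -- the test function h and its gradient
  have hgradh : ∀ x, HasGradientAt (fun v : EuclideanSpace ℝ (Fin d) => g v - (inner ℝ v vg : ℝ))
      (gradient g x - vg) x := by
    intro x
    have hg' : HasFDerivAt g (InnerProductSpace.toDual ℝ _ (gradient g x)) x :=
      ((hgdiff x).hasGradientAt).hasFDerivAt
    have hlin : HasFDerivAt (fun v : EuclideanSpace ℝ (Fin d) => (inner ℝ v vg : ℝ))
        (InnerProductSpace.toDual ℝ _ vg) x := by
      have heq : (fun v : EuclideanSpace ℝ (Fin d) => (inner ℝ v vg : ℝ))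
          = fun v => (InnerProductSpace.toDual ℝ (EuclideanSpace ℝ (Fin d))) vg v := by
        funext v
        rw [InnerProductSpace.toDual_apply_apply, real_inner_comm]
      rw [heq]
      exact (InnerProductSpace.toDual ℝ (EuclideanSpace ℝ (Fin d)) vg).hasFDerivAt
    have hsub := hg'.sub hlin
    rw [hasGradientAt_iff_hasFDerivAt, map_sub]
    exact hsub
  have hgeq : ∀ x, gradient (fun v : EuclideanSpace ℝ (Fin d) => g v - (inner ℝ v vg : ℝ)) x
      = gradient g x - vg := fun x => (hgradh x).gradient
  have hdiffh : Differentiable ℝ (fun v : EuclideanSpace ℝ (Fin d) => g v - (inner ℝ v vg : ℝ)) :=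
    fun x => ((hgradh x).hasFDerivAt).differentiableAt
  -- integrability hypotheses for the Poincaré inequality
  have IH0 : Integrable (fun v : EuclideanSpace ℝ (Fin d) => (g v - (inner ℝ v vg : ℝ)) * f₀ v) := by
    have heq : (fun v : EuclideanSpace ℝ (Fin d) => (g v - (inner ℝ v vg : ℝ)) * f₀ v)
        = fun v => g v * f₀ v - (inner ℝ v vg : ℝ) * f₀ v := by funext v; ring
    rw [heq]; exact hg0.sub hIinner1
  have hginner : Integrable (fun v : EuclideanSpace ℝ (Fin d) => g v * (inner ℝ v vg : ℝ) * f₀ v) := by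
    have h1 : Integrable (fun v : EuclideanSpace ℝ (Fin d) =>
        (inner ℝ ((g v * f₀ v) • v) vg : ℝ)) := hg1.inner_const vg
    have heq : (fun v : EuclideanSpace ℝ (Fin d) => g v * (inner ℝ v vg : ℝ) * f₀ v)
        = fun v => (inner ℝ ((g v * f₀ v) • v) vg : ℝ) := by
      funext v
      rw [real_inner_smul_left]
      ring
    rw [heq]; exact h1
  have heq2 : (fun v : EuclideanSpace ℝ (Fin d) => (g v - (inner ℝ v vg : ℝ)) ^ 2 * f₀ v)
      = fun v => (g v ^ 2 * f₀ v - 2 * (g v * (inner ℝ v vg : ℝ) * f₀ v)) + (inner ℝ v vg : ℝ) ^ 2 * f₀ v := by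
    funext v; ring
  have IH2 : Integrable (fun v : EuclideanSpace ℝ (Fin d) => (g v - (inner ℝ v vg : ℝ)) ^ 2 * f₀ v) := by
    rw [heq2]; exact (hg2.sub (hginner.const_mul 2)).add hIinner2
  have heq3 : (fun v : EuclideanSpace ℝ (Fin d) =>
      ‖gradient (fun v : EuclideanSpace ℝ (Fin d) => g v - (inner ℝ v vg : ℝ)) v‖ ^ 2 * f₀ v)
      = fun v => ‖gradient g v - vg‖ ^ 2 * f₀ v := by
    funext v; rw [hgeq]
  have IHgrad : Integrable (fun v : EuclideanSpace ℝ (Fin d) =>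
      ‖gradient (fun v : EuclideanSpace ℝ (Fin d) => g v - (inner ℝ v vg : ℝ)) v‖ ^ 2 * f₀ v) := by
    rw [heq3]; exact hgradvg
  have hmeanh : (∫ v : EuclideanSpace ℝ (Fin d), (g v - (inner ℝ v vg : ℝ)) * f₀ v) = 0 := by
    have heq : (fun v : EuclideanSpace ℝ (Fin d) => (g v - (inner ℝ v vg : ℝ)) * f₀ v)
        = fun v => g v * f₀ v - (inner ℝ v vg : ℝ) * f₀ v := by funext v; ring
    rw [heq, integral_sub hg0 hIinner1, hmean, hodd, sub_zero]
  have key := hPoincare _ hdiffh IH2 IHgrad IH0 hmeanh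
  rw [heq3] at key
  -- splitting the quadratic integral
  have hinner_int : (∫ v : EuclideanSpace ℝ (Fin d), g v * (inner ℝ v vg : ℝ) * f₀ v) = D * ‖vg‖ ^ 2 := by
    have heq4 : (fun v : EuclideanSpace ℝ (Fin d) => g v * (inner ℝ v vg : ℝ) * f₀ v)
        = fun v => (inner ℝ vg ((g v * f₀ v) • v) : ℝ) := by
      funext v
      rw [real_inner_smul_right, real_inner_comm vg v]
      ring
    rw [heq4, integral_inner hg1 vg]
    have hDvg : (∫ v : EuclideanSpace ℝ (Fin d), (g v * f₀ v) • v) = D • vg := by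
      rw [hvg, smul_smul, mul_inv_cancel₀ hD.ne', one_smul]
    rw [hDvg, real_inner_smul_right, real_inner_self_eq_norm_sq]
  have hsplit : (∫ v : EuclideanSpace ℝ (Fin d), (g v - (inner ℝ v vg : ℝ)) ^ 2 * f₀ v)
      = (∫ v, g v ^ 2 * f₀ v) - 2 * (D * ‖vg‖ ^ 2)
        + ∫ v, (inner ℝ v vg : ℝ) ^ 2 * f₀ v := by
    have hsubI : Integrable (fun v : EuclideanSpace ℝ (Fin d) =>
        g v ^ 2 * f₀ v - 2 * (g v * (inner ℝ v vg : ℝ) * f₀ v)) volume :=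
      hg2.sub (hginner.const_mul 2)
    have hmulI : Integrable (fun v : EuclideanSpace ℝ (Fin d) =>
        2 * (g v * (inner ℝ v vg : ℝ) * f₀ v)) volume := hginner.const_mul 2
    rw [heq2, integral_add hsubI hIinner2, integral_sub hg2 hmulI, integral_const_mul, hinner_int]
  rw [hsplit] at key

  -- isotropy: the quadratic moment is independent of the (unit) direction
  have hiso : ∀ w w' : EuclideanSpace ℝ (Fin d), ‖w‖ = 1 → ‖w'‖ = 1 →
      (∫ v, (inner ℝ v w : ℝ) ^ 2 * f₀ v) = ∫ v, (inner ℝ v w' : ℝ) ^ 2 * f₀ v := by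
    intro w w' hw hw'
    set R := Submodule.reflection (ℝ ∙ (w - w'))ᗮ with hR
    have hRw : R w = w' := Submodule.reflection_sub (by rw [hw, hw'])
    have hmp : MeasurePreserving R volume volume := R.measurePreserving
    have hemb : MeasurableEmbedding R := R.toHomeomorph.measurableEmbedding
    have hcomp := hmp.integral_comp hemb (fun v => (inner ℝ v w' : ℝ) ^ 2 * f₀ v)
    have hpt : ∀ v, (inner ℝ (R v) w' : ℝ) ^ 2 * f₀ (R v) = (inner ℝ v w : ℝ) ^ 2 * f₀ v := by
      intro v
      rw [← hRw, R.inner_map_map, hf₀norm (R v) v (R.norm_map v)]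
    calc (∫ v, (inner ℝ v w : ℝ) ^ 2 * f₀ v)
        = ∫ v, (inner ℝ (R v) w' : ℝ) ^ 2 * f₀ (R v) := by
          congr 1; funext v; rw [hpt]
      _ = ∫ v, (inner ℝ v w' : ℝ) ^ 2 * f₀ v := hcomp
  -- the coordinate moments sum to the second moment
  have hsum : (∑ i : Fin d, ∫ v : EuclideanSpace ℝ (Fin d),
      (inner ℝ v (EuclideanSpace.single i (1:ℝ)) : ℝ) ^ 2 * f₀ v) = ∫ v, ‖v‖ ^ 2 * f₀ v := by
    rw [← integral_finset_sum _ (fun i _ => hIinnerW (EuclideanSpace.single i (1:ℝ)))]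
    congr 1; funext v
    have h1 : ∀ i : Fin d, (inner ℝ v (EuclideanSpace.single i (1:ℝ)) : ℝ) = v i := by
      intro i; rw [EuclideanSpace.inner_single_right]; simp
    have h2 : ‖v‖ ^ 2 = ∑ i, (v i) ^ 2 := by
      rw [EuclideanSpace.norm_eq, Real.sq_sqrt (by positivity)]
      congr 1; funext i; rw [Real.norm_eq_abs, sq_abs]
    simp only [h1, h2, Finset.sum_mul]
  -- hence each coordinate moment is at least D
  set i0 : Fin d := ⟨0, by omega⟩ with hi0
  set c : ℝ := ∫ v : EuclideanSpace ℝ (Fin d),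
      (inner ℝ v (EuclideanSpace.single i0 (1:ℝ)) : ℝ) ^ 2 * f₀ v with hc
  have hunit : ∀ i : Fin d, ‖EuclideanSpace.single i (1:ℝ)‖ = 1 := by
    intro i; rw [EuclideanSpace.norm_single]; norm_num
  have hceq : ∀ i : Fin d, (∫ v : EuclideanSpace ℝ (Fin d),
      (inner ℝ v (EuclideanSpace.single i (1:ℝ)) : ℝ) ^ 2 * f₀ v) = c :=
    fun i => hiso _ _ (hunit i) (hunit i0)
  have hdc : (d : ℝ) * c = ∫ v, ‖v‖ ^ 2 * f₀ v := by
    rw [← hsum]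
    simp only [hceq]
    rw [Finset.sum_const, Finset.card_univ, Fintype.card_fin, nsmul_eq_mul]
  have hcD : D ≤ c := by
    have hdpos : (0:ℝ) < d := by exact_mod_cast hd
    have : (d:ℝ) * D ≤ (d:ℝ) * c := by rw [hdc]; exact hmom
    exact le_of_mul_le_mul_left this hdpos
  -- lower bound for the quadratic moment in direction vg
  have hQ : D * ‖vg‖ ^ 2 ≤ ∫ v : EuclideanSpace ℝ (Fin d), (inner ℝ v vg : ℝ) ^ 2 * f₀ v := by
    rcases eq_or_ne vg 0 with h0 | h0
    · simp [h0]
    · set u : EuclideanSpace ℝ (Fin d) := ‖vg‖⁻¹ • vg with hu'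
      have hu : ‖u‖ = 1 := norm_smul_inv_norm h0
      have hvg0 : (0:ℝ) < ‖vg‖ := norm_pos_iff.mpr h0
      have hvgu : ∀ v : EuclideanSpace ℝ (Fin d), (inner ℝ v vg : ℝ) = ‖vg‖ * (inner ℝ v u : ℝ) := by
        intro v
        rw [hu', real_inner_smul_right, ← mul_assoc, mul_inv_cancel₀ hvg0.ne', one_mul]
      have hrw : (∫ v : EuclideanSpace ℝ (Fin d), (inner ℝ v vg : ℝ) ^ 2 * f₀ v)
          = ‖vg‖ ^ 2 * ∫ v, (inner ℝ v u : ℝ) ^ 2 * f₀ v := by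
        rw [← integral_const_mul]
        congr 1; funext v; rw [hvgu]; ring
      rw [hrw, hiso u _ hu (hunit i0), ← hc]
      nlinarith [sq_nonneg ‖vg‖]
  -- conclusion
  have h2 : Λ * ((∫ v, g v ^ 2 * f₀ v) - D * ‖vg‖ ^ 2)
      ≤ ∫ v, ‖gradient g v - vg‖ ^ 2 * f₀ v := by
    nlinarith [mul_nonneg hΛ.le (sub_nonneg.mpr hQ)]
  have h3 := mul_le_mul_of_nonneg_left h2 (sq_nonneg D)
  nlinarith [h3]
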